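/- arXiv:1409.2319 — 2 statements merged into one kernel-verified Lean document; each statement's English description precedes it below -/
import Mathlib

section
/- Suppose R is 𝔪-adically complete and F-pure. Then every Φ(E)-special ideal of R is fully Φ(E)-special. -/
open TensorProduct IsLocalRing DirectSum

universe u v

/-! ### Frobenius twists and base change -/

/-- `R` viewed as an algebra over itself via the `n`-th power of the Frobenius
endomorphism; this plays the role of `R^{(n)}` (an `R`-module via `r • s = r ^ p ^ n * s`). -/
def FrobAlg (R : Type u) (p n : ℕ) [CommRing R] [Fact p.Prime] [CharP R p] : Type u := R

namespace FrobAlg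

variable (R : Type u) (p n : ℕ) [CommRing R] [Fact p.Prime] [CharP R p]

instance : CommRing (FrobAlg R p n) := inferInstanceAs (CommRing R)

instance : Algebra R (FrobAlg R p n) :=
  RingHom.toAlgebra (show R →+* FrobAlg R p n from (frobenius R p) ^ n)

/-- The canonical identification of `R` with the underlying set of `R^{(n)}`. -/
def of (r : R) : FrobAlg R p n := r

end FrobAlg

/-- The Frobenius base change `R^{(n)} ⊗_R M` of an `R`-module `M` along the `n`-th
power of the Frobenius endomorphism of `R`. -/
def FrobBC (R : Type u) (p n : ℕ) [CommRing R] [Fact p.Prime] [CharP R p]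
    (M : Type v) [AddCommGroup M] [Module R M] : Type (max u v) :=
  FrobAlg R p n ⊗[R] M

namespace FrobBC

variable (R : Type u) (p n : ℕ) [CommRing R] [Fact p.Prime] [CharP R p]
  (M : Type v) [AddCommGroup M] [Module R M]

noncomputable instance : AddCommGroup (FrobBC R p n M) :=
  inferInstanceAs (AddCommGroup (FrobAlg R p n ⊗[R] M))

/-- The `R`-module structure on `R^{(n)} ⊗_R M` given by multiplication on the first
factor. -/
noncomputable instance : Module R (FrobBC R p n M) :=
  inferInstanceAs (Module (FrobAlg R p n) (FrobAlg R p n ⊗[R] M))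

variable {M}

/-- The elementary tensor `r ⊗ m` in `R^{(n)} ⊗_R M`. -/
noncomputable def tmul (r : R) (m : M) : FrobBC R p n M := FrobAlg.of R p n r ⊗ₜ[R] m

end FrobBC

/-- `R` is `F`-pure if for every `R`-module `M` the natural map
`M → R^{(1)} ⊗_R M`, `m ↦ 1 ⊗ m`, is injective. -/
def IsFPure (R : Type u) (p : ℕ) [CommRing R] [Fact p.Prime] [CharP R p] : Prop :=
  ∀ (M : Type u) [AddCommGroup M] [Module R M],
    Function.Injective fun m : M => FrobBC.tmul R p 1 (1 : R) m

/-- An ideal `𝔞` of `R` is fully `Φ(E)`-special if for every `n ≥ 1`, every `r ∈ 𝔞` and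
every `e ∈ (0 :_E 𝔞)`, the element `r ⊗ e` is zero in `R^{(n)} ⊗_R E`. -/
def IsFullyPhiSpecial (R : Type u) (p : ℕ) [CommRing R] [Fact p.Prime] [CharP R p]
    (E : Type v) [AddCommGroup E] [Module R E] (𝔞 : Ideal R) : Prop :=
  ∀ n : ℕ, 1 ≤ n → ∀ r ∈ 𝔞, ∀ e : E, (∀ a ∈ 𝔞, a • e = 0) → FrobBC.tmul R p n r e = 0

/-! ### The module `Φ(E)` and the Frobenius shift -/

/-- The Frobenius `a ↦ a ^ p`, as an `R`-algebra map `R^{(n)} → R^{(n+1)}`. -/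
def frobStepAlg (R : Type u) (p n : ℕ) [CommRing R] [Fact p.Prime] [CharP R p] :
    FrobAlg R p n →ₐ[R] FrobAlg R p (n + 1) :=
  { (show FrobAlg R p n →+* FrobAlg R p (n + 1) from frobenius R p) with
    commutes' := fun r => by
      show frobenius R p (((frobenius R p) ^ n) r) = ((frobenius R p) ^ (n + 1)) r
      rw [pow_succ']
      rfl }

/-- The Frobenius `a ↦ a ^ p`, as an `R`-linear map `R^{(n)} → R^{(n+1)}`. -/
def frobStep (R : Type u) (p n : ℕ) [CommRing R] [Fact p.Prime] [CharP R p] :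
    FrobAlg R p n →ₗ[R] FrobAlg R p (n + 1) :=
  (frobStepAlg R p n).toLinearMap

/-- The graded module `Φ(E) = ⊕_{n ≥ 0} R^{(n)} ⊗_R E`. -/
def PhiModule (R : Type u) (p : ℕ) [CommRing R] [Fact p.Prime] [CharP R p]
    (E : Type v) [AddCommGroup E] [Module R E] : Type (max u v) :=
  ⨁ n : ℕ, FrobBC R p n E

namespace PhiModule

variable (R : Type u) (p : ℕ) [CommRing R] [Fact p.Prime] [CharP R p]
  (E : Type v) [AddCommGroup E] [Module R E]

noncomputable instance : AddCommGroup (PhiModule R p E) :=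
  inferInstanceAs (AddCommGroup (⨁ n : ℕ, FrobBC R p n E))

noncomputable instance : Module R (PhiModule R p E) :=
  inferInstanceAs (Module R (⨁ n : ℕ, FrobBC R p n E))

/-- The inclusion of the `n`-th component into `Φ(E)`. -/
noncomputable def of (n : ℕ) (g : FrobBC R p n E) : PhiModule R p E :=
  DirectSum.of (fun m : ℕ => FrobBC R p m E) n g

/-- The Frobenius-semilinear shift operator `x` on `Φ(E)`, sending an element
`r ⊗ e` of the `n`-th component to `r ^ p ⊗ e` in the `(n+1)`-th component. -/
noncomputable def shift : PhiModule R p E →+ PhiModule R p E :=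
  DirectSum.toAddMonoid fun n =>
    (DirectSum.of (fun m : ℕ => FrobBC R p m E) (n + 1)).comp
      (TensorProduct.map (frobStep R p n) (LinearMap.id (R := R) (M := E))).toAddMonoidHom

end PhiModule

/-- An ideal `𝔞` of `R` is `Φ(E)`-special if it is the annihilator of an
`R[x,f]`-submodule of `Φ(E)`, i.e. of an `R`-submodule stable under the shift operator. -/
def IsPhiSpecial (R : Type u) (p : ℕ) [CommRing R] [Fact p.Prime] [CharP R p]
    (E : Type v) [AddCommGroup E] [Module R E] (𝔞 : Ideal R) : Prop :=
  ∃ N : Submodule R (PhiModule R p E),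
    (∀ g ∈ N, PhiModule.shift R p E g ∈ N) ∧ 𝔞 = N.annihilator

/-! ### Further notions -/

/-- The `q`-th bracket (Frobenius) power `I^{[q]}` of an ideal: the ideal generated by
the `q`-th powers of the elements of `I`. -/
def Ideal.bracketPow {S : Type u} [CommRing S] (I : Ideal S) (q : ℕ) : Ideal S :=
  Ideal.span ((fun x => x ^ q) '' (I : Set S))

/-- A Noetherian local ring is regular if its maximal ideal can be generated by
`dim S` elements. -/
def IsRegularLocal (S : Type u) [CommRing S] [IsLocalRing S] : Prop :=
  ∃ s : Finset S, (s.card : WithBot (WithTop ℕ)) = ringKrullDim S ∧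
    Ideal.span (s : Set S) = maximalIdeal S

/-- An ideal `𝔟` of `R` is uniformly `F`-compatible if for every `n ≥ 1` and every
`R`-linear map `φ : R^{(n)} → R` one has `φ(𝔟) ⊆ 𝔟`. -/
def UniformlyFCompatible (R : Type u) (p : ℕ) [CommRing R] [Fact p.Prime] [CharP R p]
    (𝔟 : Ideal R) : Prop :=
  ∀ n : ℕ, 1 ≤ n → ∀ φ : FrobAlg R p n →ₗ[R] R, ∀ b ∈ 𝔟, φ (FrobAlg.of R p n b) ∈ 𝔟

/-- `R` is `F`-finite if `R^{(1)}` is a finitely generated `R`-module. -/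
def IsFFinite (R : Type u) (p : ℕ) [CommRing R] [Fact p.Prime] [CharP R p] : Prop :=
  Module.Finite R (FrobAlg R p 1)

/-- A Noetherian local ring `T` of characteristic `p` is strongly `F`-regular in the
sense of Lyubeznik and Smith if the tight closure of `0` in the injective envelope of
the residue field of `T` is zero. -/
def IsStronglyFRegularLS (T : Type u) (p : ℕ) [CommRing T] [IsLocalRing T]
    [Fact p.Prime] [CharP T p] : Prop :=
  ∀ (ET : Type u) [AddCommGroup ET] [Module T ET],
    Module.Injective T ET →
    ∀ ι : (T ⧸ maximalIdeal T) →ₗ[T] ET, Function.Injective ι →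
    (∀ N : Submodule T ET, N ⊓ LinearMap.range ι = ⊥ → N = ⊥) →
    ∀ m : ET,
      (∃ c : T, (∀ P ∈ minimalPrimes T, c ∉ P) ∧
        ∃ N₀ : ℕ, ∀ n : ℕ, N₀ ≤ n → FrobBC.tmul T p n c m = 0) → m = 0

/-- `Q` is a minimal primary decomposition of the ideal `𝔄`: the `Q i` are primary,
`𝔄` is their intersection, their radicals are pairwise distinct, and none of them
contains the intersection of the others. -/
def IsMinimalPrimaryDecomposition {S : Type u} [CommRing S] (𝔄 : Ideal S) {t : ℕ}
    (Q : Fin t → Ideal S) : Prop :=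
  𝔄 = ⨅ i, Q i ∧ (∀ i, (Q i).IsPrimary) ∧
    (Function.Injective fun i => (Q i).radical) ∧
    ∀ i, ¬ (⨅ j, ⨅ (_ : j ≠ i), Q j) ≤ Q i

/-!
Write `𝔞 = ann N` for a shift-stable `N ⊆ Φ(E)`, and let `L ⊆ E` be spanned by the elements
`φ (g_m)`, where `g ∈ N`, `g_m` is its `m`-th component and `φ : R^{(m)} ⊗ E → E` is `R`-linear.
As `E` is an injective cogenerator, `ann L ⊆ ann N = 𝔞`; Matlis duality over the complete ring `R`
(which rests on `End_R(E) = R`, proved layer by layer on `(0 :_E 𝔪^t)` and glued by completeness)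
then gives `(0 :_E 𝔞) ⊆ L`. Finally, for `r ∈ 𝔞`, the tensor `r ⊗ φ (g_m)` is the image of
`r • x^n g ∈ r N = 0` under `R^{(m+n)} ⊗ E ≅ R^{(n)} ⊗ (R^{(m)} ⊗ E) → R^{(n)} ⊗ E`.
-/

section InjectiveHull

variable {R : Type u} [CommRing R] [IsLocalRing R] {E : Type u} [AddCommGroup E] [Module R E]
  {ι : (R ⧸ maximalIdeal R) →ₗ[R] E}

theorem exists_linearMap_apply_ne_zero (hE : Module.Injective R E) (hι : Function.Injective ι)
    {M : Type u} [AddCommGroup M] [Module R M] {z : M} (hz : z ≠ 0) :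
    ∃ φ : M →ₗ[R] E, φ z ≠ 0 := by
  set J := LinearMap.ker (LinearMap.toSpanSingleton R M z)
  have hJ : J ≤ maximalIdeal R := le_maximalIdeal fun h => hz <| by
    simpa [J] using (h ▸ Submodule.mem_top : (1 : R) ∈ J)
  obtain ⟨φ, hφ⟩ := hE.out (J.liftQ _ le_rfl)
    (by rw [← LinearMap.ker_eq_bot, Submodule.ker_liftQ_eq_bot _ _ _ le_rfl])
    (ι ∘ₗ Submodule.factor hJ)
  refine ⟨φ, ?_⟩
  have hφz := hφ (Submodule.Quotient.mk 1)
  rw [Submodule.liftQ_apply, LinearMap.toSpanSingleton_apply, one_smul,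
    LinearMap.comp_apply] at hφz
  rw [hφz]
  exact (map_ne_zero_iff ι hι).2 one_ne_zero

theorem apply_one_mem_of_ne_bot (hess : ∀ N : Submodule R E, N ⊓ LinearMap.range ι = ⊥ → N = ⊥)
    {N : Submodule R E} (hN : N ≠ ⊥) : ι 1 ∈ N := by
  obtain ⟨w, ⟨hwN, v, rfl⟩, hw⟩ := Submodule.exists_mem_ne_zero_of_ne_bot (mt (hess N) hN)
  obtain ⟨s, rfl⟩ := Ideal.Quotient.mk_surjective v
  obtain ⟨u, rfl⟩ : IsUnit s := notMem_maximalIdeal.1 fun hs => hw <| by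
    rw [Ideal.Quotient.eq_zero_iff_mem.2 hs, map_zero]
  convert N.smul_mem (↑u⁻¹ : R) hwN
  rw [← map_smul, Algebra.smul_def, Ideal.Quotient.algebraMap_eq, ← map_mul, Units.inv_mul,
    map_one (Ideal.Quotient.mk _)]

theorem mem_range_of_forall_smul_eq_zero (hι : Function.Injective ι)
    (hess : ∀ N : Submodule R E, N ⊓ LinearMap.range ι = ⊥ → N = ⊥) {e : E}
    (he : ∀ a ∈ maximalIdeal R, a • e = 0) : e ∈ LinearMap.range ι := by
  rcases eq_or_ne e 0 with rfl | he0
  · exact zero_mem _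
  obtain ⟨c, hc⟩ := Submodule.mem_span_singleton.1 <|
    apply_one_mem_of_ne_bot hess (N := R ∙ e) (by simpa using he0)
  obtain ⟨u, rfl⟩ : IsUnit c := notMem_maximalIdeal.1 fun hc' =>
    (map_ne_zero_iff ι hι).2 one_ne_zero (hc ▸ he c hc')
  exact ⟨(↑u⁻¹ : R) • 1, by rw [map_smul, ← hc, smul_smul, Units.inv_mul, one_smul]⟩

theorem exists_forall_apply_eq_smul_apply (hι : Function.Injective ι)
    (hess : ∀ N : Submodule R E, N ⊓ LinearMap.range ι = ⊥ → N = ⊥)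
    (ψ : (R ⧸ maximalIdeal R) →ₗ[R] E) : ∃ c : R, ∀ v, ψ v = c • ι v := by
  have hmk : ∀ s : R, Ideal.Quotient.mk (maximalIdeal R) s = s • (1 : R ⧸ maximalIdeal R) :=
    by simp [Algebra.smul_def]
  obtain ⟨w, hw⟩ := mem_range_of_forall_smul_eq_zero hι hess (e := ψ 1) fun a ha => by
    rw [← map_smul, ← hmk, Ideal.Quotient.eq_zero_iff_mem.2 ha, map_zero]
  obtain ⟨c, rfl⟩ := Ideal.Quotient.mk_surjective w
  refine ⟨c, fun v => ?_⟩
  obtain ⟨s, rfl⟩ := Ideal.Quotient.mk_surjective v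
  rw [hmk s, map_smul, map_smul, ← hw, hmk c, map_smul, smul_comm]

theorem exists_mem_torsionBySet_pow [IsNoetherianRing R] (hι : Function.Injective ι)
    (hess : ∀ N : Submodule R E, N ⊓ LinearMap.range ι = ⊥ → N = ⊥) (e : E) :
    ∃ t : ℕ, e ∈ Submodule.torsionBySet R E ↑(maximalIdeal R ^ t) := by
  by_contra! h
  -- otherwise `ι 1` lies in every `𝔪 ^ t • (R ∙ e)`, against Krull's intersection theorem
  have hmem : ∀ t : ℕ, ι 1 ∈ maximalIdeal R ^ t • (R ∙ e) := fun t =>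
    apply_one_mem_of_ne_bot hess fun hbot => h t <| (Submodule.mem_torsionBySet_iff _ _).2
      fun ⟨a, ha⟩ => by
        simpa [hbot] using Submodule.smul_mem_smul ha (Submodule.mem_span_singleton_self e)
  have hone : ι 1 ∈ R ∙ e := by simpa using hmem 0
  have hkrull := Ideal.iInf_pow_smul_eq_bot_of_isLocalRing (M := R ∙ e) (maximalIdeal R)
    (maximalIdeal.isMaximal R).ne_top
  have hzero : (⟨ι 1, hone⟩ : R ∙ e) = 0 := by
    rw [← Submodule.mem_bot R, ← hkrull, Submodule.mem_iInf]
    exact fun t => (Submodule.mem_smul_top_iff _ _ _).2 (hmem t)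
  exact (map_ne_zero_iff ι hι).2 one_ne_zero (congrArg Subtype.val hzero)

theorem exists_eq_sum_smul_of_iInf_ker_le (hE : Module.Injective R E) (hι : Function.Injective ι)
    (hess : ∀ N : Submodule R E, N ⊓ LinearMap.range ι = ⊥ → N = ⊥)
    {κ : Type u} [Fintype κ] {M : Type u} [AddCommGroup M] [Module R M]
    (μ : κ → M →ₗ[R] E) (τ : M →ₗ[R] E) (hμ : ∀ i x, μ i x ∈ LinearMap.range ι)
    (hτ : ⨅ i, LinearMap.ker (μ i) ≤ LinearMap.ker τ) :
    ∃ c : κ → R, τ = ∑ i, c i • μ i := by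
  classical
  -- `τ` factors through `LinearMap.pi μ`; extend the factorisation to `κ → E` by injectivity.
  -- On the socle summands the extension is scalar.
  have hK : LinearMap.ker (LinearMap.pi μ) ≤ LinearMap.ker τ := by rwa [LinearMap.ker_pi]
  obtain ⟨ψ, hψ⟩ := hE.out ((LinearMap.ker _).liftQ (LinearMap.pi μ) le_rfl)
    (by rw [← LinearMap.ker_eq_bot, Submodule.ker_liftQ_eq_bot _ _ _ le_rfl])
    ((LinearMap.ker _).liftQ τ hK)
  choose c hc using fun i =>
    exists_forall_apply_eq_smul_apply hι hess (ψ ∘ₗ LinearMap.single R _ i ∘ₗ ι)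
  refine ⟨c, LinearMap.ext fun x => ?_⟩
  have hx := hψ (Submodule.Quotient.mk x)
  rw [Submodule.liftQ_apply, Submodule.liftQ_apply, ← Finset.univ_sum_single (LinearMap.pi μ x),
    map_sum] at hx
  rw [← hx, LinearMap.sum_apply]
  refine Finset.sum_congr rfl fun i _ => ?_
  obtain ⟨v, hv⟩ := hμ i x
  simpa [← hv] using hc i v

theorem exists_forall_mem_torsionBySet_pow_apply_eq_smul [IsNoetherianRing R]
    (hE : Module.Injective R E) (hι : Function.Injective ι)
    (hess : ∀ N : Submodule R E, N ⊓ LinearMap.range ι = ⊥ → N = ⊥) (φ : E →ₗ[R] E) (t : ℕ) :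
    ∃ r : R, ∀ z ∈ Submodule.torsionBySet R E ↑(maximalIdeal R ^ t), φ z = r • z := by
  induction t with
  | zero => exact ⟨0, fun z hz => by simp_all⟩
  | succ t ih =>
    obtain ⟨r, hr⟩ := ih
    -- on the next layer, `φ - r` and the multiplications by generators of `𝔪 ^ t` land in the
    -- socle, and `φ - r` vanishes wherever all those multiplications do
    obtain ⟨s, hs⟩ := (maximalIdeal R ^ t).fg_of_isNoetherianRing
    set M := Submodule.torsionBySet R E ↑(maximalIdeal R ^ (t + 1))
    have hμ : ∀ (a : s) (x : M), (a : R) • (x : E) ∈ LinearMap.range ι := fun a x =>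
      mem_range_of_forall_smul_eq_zero hι hess fun b hb => by
        rw [smul_smul]
        exact (Submodule.mem_torsionBySet_iff _ _).1 x.2
          ⟨b * a, by rw [pow_succ']; exact Ideal.mul_mem_mul hb (hs ▸ Ideal.subset_span a.2)⟩
    have hτ : ⨅ a : s, LinearMap.ker ((a : R) • M.subtype) ≤
        LinearMap.ker ((φ - r • LinearMap.id) ∘ₗ M.subtype) := fun x hx => by
      have hxt : (x : E) ∈ Submodule.torsionBySet R E ↑(maximalIdeal R ^ t) := by
        rw [← hs, ← Submodule.torsionBySet_eq_torsionBySet_span, Submodule.mem_torsionBySet_iff]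
        simpa [Submodule.mem_iInf] using hx
      simp [hr _ hxt]
    obtain ⟨c, hc⟩ := exists_eq_sum_smul_of_iInf_ker_le hE hι hess _ _ hμ hτ
    refine ⟨r + ∑ a, c a * a, fun z hz => ?_⟩
    have hz := congr($hc ⟨z, hz⟩)
    simp only [LinearMap.comp_apply, LinearMap.sub_apply, LinearMap.sum_apply,
      LinearMap.smul_apply, LinearMap.id_apply, Submodule.subtype_apply, sub_eq_iff_eq_add'] at hz
    simp only [hz, add_smul, Finset.sum_smul, mul_smul]

theorem mem_of_forall_mem_torsionBySet_smul_eq_zero (hE : Module.Injective R E)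
    (hι : Function.Injective ι) {I : Ideal R} {s : R}
    (h : ∀ z ∈ Submodule.torsionBySet R E I, s • z = 0) : s ∈ I := by
  by_contra hs
  obtain ⟨φ, hφ⟩ := exists_linearMap_apply_ne_zero hE hι
    (z := Submodule.Quotient.mk (p := I) s) (by rwa [Ne, Submodule.Quotient.mk_eq_zero])
  refine hφ ?_
  have hmk : ∀ a : R, Submodule.Quotient.mk (p := I) a = a • Submodule.Quotient.mk 1 :=
    fun a => by rw [← Submodule.Quotient.mk_smul, smul_eq_mul, mul_one]
  rw [hmk, map_smul]
  refine h _ ((Submodule.mem_torsionBySet_iff _ _).2 fun ⟨a, ha⟩ => ?_)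
  rw [← map_smul, ← hmk, (Submodule.Quotient.mk_eq_zero _).2 ha, map_zero]

theorem exists_forall_apply_eq_smul_of_isAdicComplete [IsNoetherianRing R]
    (hE : Module.Injective R E) (hι : Function.Injective ι)
    (hess : ∀ N : Submodule R E, N ⊓ LinearMap.range ι = ⊥ → N = ⊥)
    (hcomplete : IsAdicComplete (maximalIdeal R) R) (φ : E →ₗ[R] E) :
    ∃ r : R, ∀ z, φ z = r • z := by
  choose r hr using exists_forall_mem_torsionBySet_pow_apply_eq_smul hE hι hess φ
  have hsub : ∀ m n, m ≤ n → r m - r n ∈ maximalIdeal R ^ m := fun m n hmn =>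
    mem_of_forall_mem_torsionBySet_smul_eq_zero hE hι fun z hz => by
      rw [sub_smul, ← hr m z hz,
        ← hr _ z (Submodule.torsionBySet_le_torsionBySet_pow _ _ hmn _ hz), sub_self]
  obtain ⟨r₀, hr₀⟩ := hcomplete.toIsPrecomplete.prec fun hmn => by
    simpa [SModEq.sub_mem] using hsub _ _ hmn
  refine ⟨r₀, fun z => ?_⟩
  obtain ⟨t, ht⟩ := exists_mem_torsionBySet_pow hι hess z
  have hlim : r t - r₀ ∈ maximalIdeal R ^ t := by simpa [SModEq.sub_mem] using hr₀ t
  rw [hr t z ht, ← sub_eq_zero, ← sub_smul]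
  exact (Submodule.mem_torsionBySet_iff _ _).1 ht ⟨_, hlim⟩

theorem mem_of_forall_mem_annihilator_smul_eq_zero [IsNoetherianRing R]
    (hE : Module.Injective R E) (hι : Function.Injective ι)
    (hess : ∀ N : Submodule R E, N ⊓ LinearMap.range ι = ⊥ → N = ⊥)
    (hcomplete : IsAdicComplete (maximalIdeal R) R) {L : Submodule R E} {e : E}
    (h : ∀ s ∈ L.annihilator, s • e = 0) : e ∈ L := by
  by_contra he
  obtain ⟨ψ, hψ⟩ := exists_linearMap_apply_ne_zero hE hι
    (z := L.mkQ e) (by rwa [Ne, Submodule.mkQ_apply, Submodule.Quotient.mk_eq_zero])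
  obtain ⟨r, hr⟩ :=
    exists_forall_apply_eq_smul_of_isAdicComplete hE hι hess hcomplete (ψ ∘ₗ L.mkQ)
  refine hψ ?_
  rw [← LinearMap.comp_apply, hr]
  refine h r (Submodule.mem_annihilator.2 fun w hw => ?_)
  rw [← hr, LinearMap.comp_apply, Submodule.mkQ_apply, (Submodule.Quotient.mk_eq_zero _).2 hw,
    map_zero]

end InjectiveHull

namespace FrobAlg

variable {R : Type u} [CommRing R] {p : ℕ} [Fact p.Prime] [CharP R p] {n : ℕ}

def val (b : FrobAlg R p n) : R := b

theorem val_smul (s : R) (b : FrobAlg R p n) : (s • b).val = s ^ p ^ n * b.val := by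
  rw [Algebra.smul_def]
  show ((frobenius R p) ^ n) s * b.val = _
  rw [RingHom.coe_pow, iterate_frobenius]

end FrobAlg

namespace FrobBC

variable {R : Type u} [CommRing R] {p : ℕ} [Fact p.Prime] [CharP R p]
  {M : Type v} [AddCommGroup M] [Module R M]

theorem tmul_val (n : ℕ) (b : FrobAlg R p n) (z : M) :
    (b ⊗ₜ[R] z : FrobBC R p n M) = tmul R p n b.val z :=
  rfl

theorem smul_tmul' (n : ℕ) (r b : R) (z : M) :
    r • tmul R p n b z = tmul R p n (r * b) z :=
  show FrobAlg.of R p n r • (FrobAlg.of R p n b ⊗ₜ[R] z) = _ from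
    TensorProduct.smul_tmul' _ _ _

theorem tmul_smul (n : ℕ) (b s : R) (z : M) :
    tmul R p n b (s • z) = s ^ p ^ n • tmul R p n b z := by
  rw [smul_tmul', tmul, ← TensorProduct.smul_tmul, tmul_val, FrobAlg.val_smul]
  rfl

theorem tmul_add (n : ℕ) (b : R) (z w : M) :
    tmul R p n b (z + w) = tmul R p n b z + tmul R p n b w :=
  TensorProduct.tmul_add _ _ _

theorem tmul_zero (n : ℕ) (b : R) : tmul R p n b (0 : M) = 0 :=
  TensorProduct.tmul_zero _ _

variable (R p M) in
noncomputable def frob (m : ℕ) : FrobBC R p m M →+ FrobBC R p (m + 1) M :=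
  (TensorProduct.map (frobStep R p m) LinearMap.id).toAddMonoidHom

variable (R p M) in
noncomputable def frobIter (m : ℕ) : (k : ℕ) → FrobBC R p m M →+ FrobBC R p (m + k) M
  | 0 => AddMonoidHom.id _
  | k + 1 => (frob R p M (m + k)).comp (frobIter m k)

theorem frob_tmul (m : ℕ) (b : R) (z : M) :
    frob R p M m (tmul R p m b z) = tmul R p (m + 1) (b ^ p) z :=
  TensorProduct.map_tmul _ _ _ _

theorem frobIter_tmul (m k : ℕ) (b : R) (z : M) :
    frobIter R p M m k (tmul R p m b z) = tmul R p (m + k) (b ^ p ^ k) z := by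
  induction k with
  | zero => simp [frobIter]
  | succ k ih =>
    show frob R p M (m + k) (frobIter R p M m k (tmul R p m b z)) = _
    rw [ih, frob_tmul, ← pow_mul, ← pow_succ]
    rfl

variable (R p M) in
noncomputable def split (m n : ℕ) : FrobBC R p (m + n) M →+ FrobBC R p n (FrobBC R p m M) :=
  TensorProduct.liftAddHom
    (AddMonoidHom.mk'
      (fun b => AddMonoidHom.mk' (fun z => tmul R p n b.val (tmul R p m 1 z))
        fun z w => by rw [tmul_add, tmul_add])
      fun b c => by ext z; exact TensorProduct.add_tmul _ _ _)
    fun s b z => by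
      simp only [AddMonoidHom.mk'_apply]
      rw [FrobAlg.val_smul, tmul_smul, tmul_smul, smul_tmul', ← pow_mul, ← pow_add]

theorem split_tmul (m n : ℕ) (b : R) (z : M) :
    split R p M m n (tmul R p (m + n) b z) = tmul R p n b (tmul R p m 1 z) :=
  TensorProduct.liftAddHom_tmul _ _ _ _

theorem split_smul_frobIter (m n : ℕ) (r : R) (w : FrobBC R p m M) :
    split R p M m n (r • frobIter R p M m n w) = tmul R p n r w := by
  induction w using TensorProduct.induction_on with
  | zero =>
    show split R p M m n (r • frobIter R p M m n 0) = tmul R p n r (0 : FrobBC R p m M)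
    rw [map_zero, smul_zero, map_zero, tmul_zero]
  | tmul b z =>
    rw [tmul_val, frobIter_tmul, smul_tmul', split_tmul, mul_comm, ← smul_tmul', ← tmul_smul,
      smul_tmul', mul_one]
  | add x y hx hy =>
    change FrobBC R p m M at x y
    show split R p M m n (r • frobIter R p M m n (x + y)) = tmul R p n r (x + y)
    rw [map_add, smul_add, map_add, hx, hy, tmul_add]

theorem tmul_apply_eq_zero_of_smul_frobIter_eq_zero {m n : ℕ} {M' : Type*} [AddCommGroup M']
    [Module R M'] (φ : FrobBC R p m M →ₗ[R] M') {r : R} {w : FrobBC R p m M}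
    (h : r • frobIter R p M m n w = 0) : tmul R p n r (φ w) = 0 := by
  have hφ : tmul R p n r (φ w) = LinearMap.lTensor (FrobAlg R p n) φ (tmul R p n r w) := rfl
  rw [hφ, ← split_smul_frobIter, h, map_zero]
  exact (LinearMap.lTensor _ φ).map_zero

end FrobBC

namespace PhiModule

variable (R : Type u) [CommRing R] (p : ℕ) [Fact p.Prime] [CharP R p]
  (E : Type v) [AddCommGroup E] [Module R E]

noncomputable def component (j : ℕ) : PhiModule R p E →ₗ[R] FrobBC R p j E :=
  DirectSum.component R ℕ (fun i => FrobBC R p i E) j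

variable {R p E}

theorem ext {g h : PhiModule R p E} (hgh : ∀ j, component R p E j g = component R p E j h) :
    g = h :=
  DirectSum.ext_component R hgh

theorem component_shift (g : PhiModule R p E) (j : ℕ) :
    component R p E (j + 1) (shift R p E g) = FrobBC.frob R p E j (component R p E j g) := by
  induction g using DirectSum.induction_on with
  | zero =>
    show component R p E (j + 1) (shift R p E 0) = FrobBC.frob R p E j (component R p E j 0)
    simp only [map_zero]
  | of i w =>
    have hshift : shift R p E (DirectSum.of _ i w) =
        DirectSum.of (fun m => FrobBC R p m E) (i + 1) (FrobBC.frob R p E i w) :=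
      DirectSum.toAddMonoid_of _ _ _
    rw [hshift]
    rcases eq_or_ne i j with rfl | hij
    · show (DirectSum.of _ (i + 1) _ : ⨁ m, FrobBC R p m E) (i + 1) =
        FrobBC.frob R p E i ((DirectSum.of _ i w : ⨁ m, FrobBC R p m E) i)
      rw [DirectSum.of_eq_same, DirectSum.of_eq_same]
    · show (DirectSum.of _ (i + 1) _ : ⨁ m, FrobBC R p m E) (j + 1) =
        FrobBC.frob R p E j ((DirectSum.of _ i w : ⨁ m, FrobBC R p m E) j)
      rw [DirectSum.of_eq_of_ne _ _ _ (by omega), DirectSum.of_eq_of_ne _ _ _ hij.symm, map_zero]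
  | add g h hg hh =>
    change PhiModule R p E at g h
    show component R p E (j + 1) (shift R p E (g + h)) =
      FrobBC.frob R p E j (component R p E j (g + h))
    simp only [map_add, hg, hh]

theorem component_shift_iterate (g : PhiModule R p E) (j k : ℕ) :
    component R p E (j + k) ((shift R p E)^[k] g) =
      FrobBC.frobIter R p E j k (component R p E j g) := by
  induction k with
  | zero => rfl
  | succ k ih =>
    rw [Function.iterate_succ_apply']
    show component R p E (j + k + 1) _ = FrobBC.frob R p E (j + k) (FrobBC.frobIter R p E j k _)
    rw [component_shift, ih]

end PhiModule

theorem special_implies_fully_special_of_complete_general (R : Type u) [CommRing R] [IsNoetherianRing R] [IsLocalRing R]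
    (p : ℕ) [Fact p.Prime] [CharP R p]
    (E : Type u) [AddCommGroup E] [Module R E]
    (hE : Module.Injective R E)
    (ι : (R ⧸ maximalIdeal R) →ₗ[R] E) (hι : Function.Injective ι)
    (hess : ∀ N : Submodule R E, N ⊓ LinearMap.range ι = ⊥ → N = ⊥)
    (hcomplete : IsAdicComplete (maximalIdeal R) R)
    (𝔞 : Ideal R) (h𝔞 : IsPhiSpecial R p E 𝔞) :
    IsFullyPhiSpecial R p E 𝔞 := by
  obtain ⟨N, hN, rfl⟩ := h𝔞
  intro n _ r hr e he
  set L := Submodule.span R {y : E | ∃ m, ∃ g ∈ N, ∃ φ : FrobBC R p m E →ₗ[R] E,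
    φ (PhiModule.component R p E m g) = y}
  have hann : L.annihilator ≤ N.annihilator := fun s hs =>
    Submodule.mem_annihilator.2 fun g hg => PhiModule.ext fun j => by
      rw [map_zero]
      by_contra hne
      obtain ⟨φ, hφ⟩ := exists_linearMap_apply_ne_zero hE hι hne
      refine hφ ?_
      rw [map_smul, map_smul]
      exact Submodule.mem_annihilator.1 hs _ (Submodule.subset_span ⟨j, g, hg, φ, rfl⟩)
  have heL : e ∈ L :=
    mem_of_forall_mem_annihilator_smul_eq_zero hE hι hess hcomplete fun s hs => he s (hann hs)
  clear he
  induction heL using Submodule.span_induction with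
  | mem y hy =>
    obtain ⟨m, g, hg, φ, rfl⟩ := hy
    refine FrobBC.tmul_apply_eq_zero_of_smul_frobIter_eq_zero φ ?_
    rw [← PhiModule.component_shift_iterate, ← map_smul,
      Submodule.mem_annihilator.1 hr _ (Set.MapsTo.iterate hN n hg), map_zero]
  | zero => exact FrobBC.tmul_zero n r
  | add y z _ _ hy hz => rw [FrobBC.tmul_add, hy, hz, add_zero]
  | smul s y _ hy => rw [FrobBC.tmul_smul, hy, smul_zero]

theorem special_implies_fully_special_of_complete (R : Type u) [CommRing R] [IsNoetherianRing R] [IsLocalRing R]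
    (p : ℕ) [Fact p.Prime] [CharP R p]
    (E : Type u) [AddCommGroup E] [Module R E]
    (hE : Module.Injective R E)
    (ι : (R ⧸ maximalIdeal R) →ₗ[R] E) (hι : Function.Injective ι)
    (hess : ∀ N : Submodule R E, N ⊓ LinearMap.range ι = ⊥ → N = ⊥)
    (hcomplete : IsAdicComplete (maximalIdeal R) R)
    (hFpure : IsFPure R p)
    (𝔞 : Ideal R) (h𝔞 : IsPhiSpecial R p E 𝔞) :
    IsFullyPhiSpecial R p E 𝔞 :=
  special_implies_fully_special_of_complete_general R p E hE ι hι hess hcomplete 𝔞 h𝔞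
end

section
/- Suppose R is F-pure and that every Φ(E)-special ideal of R is fully Φ(E)-special. Let 𝔠 be a proper ideal of R that is Φ(E)-special. Then the local ring R/𝔠 is F-pure (that is, for every R/𝔠-module M, the natural map M → (R/𝔠)^{(1)} ⊗_{R/𝔠} M sending m to 1 ⊗ m is injective, where (R/𝔠)^{(1)} ⊗_{R/𝔠} M is the base change of M along the Frobenius of R/𝔠). -/
open TensorProduct IsLocalRing DirectSum

universe u v

/-!
Suppose `1 ⊗ m = 0` in `(R/𝔠)^{(1)} ⊗ M` with `m ≠ 0`. Since `R` is local, the annihilator of `m`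
lies in `𝔪`, so injectivity of `E` gives an `R`-linear `ρ : M → E` sending `m` to a nonzero socle
element. Its image lies in `(0 :_E 𝔠)`, so full `Φ(E)`-specialness of `𝔠` makes
`r̄ ⊗ x ↦ r ⊗ ρ x` a well-defined map `(R/𝔠)^{(1)} ⊗_{R/𝔠} M → R^{(1)} ⊗_R E`. It sends
`1 ⊗ m = 0` to `1 ⊗ ρ m`, so `ρ m = 0` by `F`-purity of `R`, a contradiction.
-/

theorem Module.Injective.exists_linearMap_apply_eq {R E : Type u} {M : Type*} [CommRing R]
    [AddCommGroup M] [Module R M] [AddCommGroup E] [Module R E] [Module.Injective R E]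
    {m : M} {e : E} (h : ∀ r : R, r • m = 0 → r • e = 0) :
    ∃ ρ : M →ₗ[R] E, ρ m = e := by
  let σ := LinearMap.toSpanSingleton R M m
  have hle : LinearMap.ker σ ≤ LinearMap.ker (LinearMap.toSpanSingleton R E e) := h
  obtain ⟨ρ, hρ⟩ := Module.Injective.extension_property R E _ _
    ((LinearMap.ker σ).liftQ σ le_rfl)
    (LinearMap.ker_eq_bot.mp (Submodule.ker_liftQ_eq_bot' _ _ rfl))
    ((LinearMap.ker σ).liftQ _ hle)
  refine ⟨ρ, ?_⟩
  simpa only [LinearMap.comp_apply, Submodule.liftQ_apply, σ, LinearMap.toSpanSingleton_apply,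
    one_smul] using LinearMap.congr_fun hρ (Submodule.Quotient.mk (1 : R))

theorem FrobAlg.smul_of {R : Type u} {p n : ℕ} [CommRing R] [Fact p.Prime] [CharP R p]
    (r s : R) : r • FrobAlg.of R p n s = FrobAlg.of R p n (r ^ p ^ n * s) := by
  rw [Algebra.smul_def]
  congr 1
  exact (congrArg (· r) (iterateFrobenius_eq_pow R p n)).symm

theorem FrobBC.smul_tmul {R : Type u} {p n : ℕ} [CommRing R] [Fact p.Prime] [CharP R p]
    {M : Type*} [AddCommGroup M] [Module R M] (a r : R) (m : M) :
    a • FrobBC.tmul R p n r m = FrobBC.tmul R p n (a * r) m :=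
  rfl

theorem FrobBC.tmul_eq_zero_of_quotient_tmul_eq_zero {R : Type u} {p n : ℕ} [CommRing R]
    [Fact p.Prime] [CharP R p] {I : Ideal R} [CharP (R ⧸ I) p] {M N : Type*} [AddCommGroup M]
    [Module (R ⧸ I) M] [Module R M] [IsScalarTower R (R ⧸ I) M] [AddCommGroup N]
    [Module R N] (ρ : M →ₗ[R] N) (hρ : ∀ c ∈ I, ∀ x, FrobBC.tmul R p n c (ρ x) = 0)
    {r : R} {x : M} (h : FrobBC.tmul (R ⧸ I) p n (Ideal.Quotient.mk I r) x = 0) :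
    FrobBC.tmul R p n r (ρ x) = 0 := by
  let g : M →+ FrobBC R p n N :=
    ((TensorProduct.mk R (FrobAlg R p n) N (FrobAlg.of R p n 1)).comp ρ).toAddMonoidHom
  have hg : ∀ (a : R) (x : M), (a • g) x = FrobBC.tmul R p n a (ρ x) := fun a x => by
    show a • FrobBC.tmul R p n 1 (ρ x) = _
    rw [FrobBC.smul_tmul, mul_one]
  have hI : I ≤ LinearMap.ker (LinearMap.toSpanSingleton R _ g) := fun c hc => by
    ext x
    exact (hg c x).trans (hρ c hc x)
  let G : FrobAlg (R ⧸ I) p n →+ M →+ FrobBC R p n N :=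
    (I.liftQ (LinearMap.toSpanSingleton R _ g) hI).toAddMonoidHom
  have hG : ∀ (a : R) (x : M), G (FrobAlg.of (R ⧸ I) p n (Ideal.Quotient.mk I a)) x =
      FrobBC.tmul R p n a (ρ x) := hg
  have hbal : ∀ (s : R ⧸ I) (w : FrobAlg (R ⧸ I) p n) (x : M), G (s • w) x = G w (s • x) := by
    intro s w x
    -- both sides reduce to `(a ^ p ^ n * b) ⊗ ρ x`
    obtain ⟨a, rfl⟩ := Ideal.Quotient.mk_surjective s
    obtain ⟨b, rfl⟩ : ∃ b, FrobAlg.of (R ⧸ I) p n (Ideal.Quotient.mk I b) = w :=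
      Ideal.Quotient.mk_surjective w
    have hw : Ideal.Quotient.mk I a • FrobAlg.of (R ⧸ I) p n (Ideal.Quotient.mk I b) =
        FrobAlg.of (R ⧸ I) p n (Ideal.Quotient.mk I (a ^ p ^ n * b)) := by
      rw [FrobAlg.smul_of, map_mul, map_pow]
    have hx : Ideal.Quotient.mk I a • x = a • x := algebraMap_smul (R ⧸ I) a x
    rw [hw, hG, hx, hG, map_smul]
    show _ = FrobAlg.of R p n b ⊗ₜ[R] (a • ρ x)
    rw [← TensorProduct.smul_tmul, FrobAlg.smul_of]
    rfl
  have h' := congrArg (TensorProduct.liftAddHom G hbal) h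
  rw [FrobBC.tmul, TensorProduct.liftAddHom_tmul, hG] at h'
  exact h'.trans (map_zero _)

theorem IsFPure.quotient_of_tmul_eq_zero {R : Type u} [CommRing R] [IsLocalRing R] {p : ℕ}
    [Fact p.Prime] [CharP R p] (hR : IsFPure R p) {E : Type u} [AddCommGroup E] [Module R E]
    [Module.Injective R E] {e₀ : E} (he₀ : e₀ ≠ 0) (h𝔪 : ∀ r ∈ maximalIdeal R, r • e₀ = 0)
    {I : Ideal R} [CharP (R ⧸ I) p]
    (hI : ∀ c ∈ I, ∀ e : E, (∀ a ∈ I, a • e = 0) → FrobBC.tmul R p 1 c e = 0) :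
    IsFPure (R ⧸ I) p := by
  intro M _ _
  let _ : Module R M := Module.compHom M (Ideal.Quotient.mk I)
  have : IsScalarTower R (R ⧸ I) M := ⟨fun a s x => mul_smul (Ideal.Quotient.mk I a) s x⟩
  suffices h : ∀ m : M, FrobBC.tmul (R ⧸ I) p 1 1 m = 0 → m = 0 by
    intro m₁ m₂ h₁₂
    exact sub_eq_zero.mp (h _ ((TensorProduct.tmul_sub _ _ _).trans (sub_eq_zero.mpr h₁₂)))
  intro m hm
  by_contra hm0
  have hann : ∀ r : R, r • m = 0 → r • e₀ = 0 := fun r hr =>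
    h𝔪 r <| of_not_not fun hu => hm0 ((IsLocalRing.notMem_maximalIdeal.mp hu).smul_eq_zero.mp hr)
  obtain ⟨ρ, hρm⟩ := Module.Injective.exists_linearMap_apply_eq hann
  have hρ : ∀ c ∈ I, ∀ x, FrobBC.tmul R p 1 c (ρ x) = 0 := fun c hc x =>
    hI c hc (ρ x) fun a ha => by
      rw [← map_smul, ← algebraMap_smul (R ⧸ I) a x, Ideal.Quotient.algebraMap_eq,
        Ideal.Quotient.eq_zero_iff_mem.mpr ha, zero_smul, map_zero]
  rw [← map_one (Ideal.Quotient.mk I)] at hm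
  have h1 := FrobBC.tmul_eq_zero_of_quotient_tmul_eq_zero ρ hρ hm
  exact he₀ (hρm ▸ hR E (h1.trans (TensorProduct.tmul_zero _ _).symm))

theorem quotient_by_special_is_F_pure_general (R : Type u) [CommRing R] [IsLocalRing R]
    (p : ℕ) [Fact p.Prime] [CharP R p]
    (E : Type u) [AddCommGroup E] [Module R E]
    (hE : Module.Injective R E)
    (ι : (R ⧸ maximalIdeal R) →ₗ[R] E) (hι : Function.Injective ι)
    (hFpure : IsFPure R p)
    (hfull : ∀ 𝔞 : Ideal R, IsPhiSpecial R p E 𝔞 → IsFullyPhiSpecial R p E 𝔞)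
    (𝔠 : Ideal R) (hsp : IsPhiSpecial R p E 𝔠)
    [CharP (R ⧸ 𝔠) p] :
    IsFPure (R ⧸ 𝔠) p := by
  have := hE
  have he₀ : ι 1 ≠ 0 := map_zero ι ▸ hι.ne one_ne_zero
  have hsocle : ∀ r ∈ maximalIdeal R, r • ι 1 = 0 := fun r hr => by
    rw [← map_smul, Algebra.smul_def, mul_one, Ideal.Quotient.algebraMap_eq,
      Ideal.Quotient.eq_zero_iff_mem.mpr hr, map_zero]
  exact hFpure.quotient_of_tmul_eq_zero he₀ hsocle (hfull 𝔠 hsp 1 le_rfl)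

theorem quotient_by_special_is_F_pure (R : Type u) [CommRing R] [IsNoetherianRing R] [IsLocalRing R]
    (p : ℕ) [Fact p.Prime] [CharP R p]
    (E : Type u) [AddCommGroup E] [Module R E]
    (hE : Module.Injective R E)
    (ι : (R ⧸ maximalIdeal R) →ₗ[R] E) (hι : Function.Injective ι)
    (hess : ∀ N : Submodule R E, N ⊓ LinearMap.range ι = ⊥ → N = ⊥)
    (hFpure : IsFPure R p)
    (hfull : ∀ 𝔞 : Ideal R, IsPhiSpecial R p E 𝔞 → IsFullyPhiSpecial R p E 𝔞)
    (𝔠 : Ideal R) (h𝔠 : 𝔠 ≠ ⊤) (hsp : IsPhiSpecial R p E 𝔠)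
    [CharP (R ⧸ 𝔠) p] :
    IsFPure (R ⧸ 𝔠) p :=
  quotient_by_special_is_F_pure_general R p E hE ι hι hFpure hfull 𝔠 hsp
end
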